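/- arXiv:0708.1131 — 2 statements merged into one kernel-verified Lean document; each statement's English description precedes it below -/
import Mathlib

section
/- Let n ≥ 1, m > 0, let ρ be a real-valued Schwartz function on ℝⁿ with ρ ≢ 0, and let U ∈ C²(ℂ) satisfy U(z) ≥ A − B|z|² for all z ∈ ℂ, where A ∈ ℝ and 0 ≤ B < m²/(2‖ρ‖²_{L²}). Then for every Ψ = (ψ, π) ∈ E one has the coercivity bound ‖Ψ‖²_E ≤ (2m²/(m² − 2B‖ρ‖²_{L²}))·(H(Ψ) − A). -/
noncomputable section

open MeasureTheory Complex Filter Metric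

/-- `ℝⁿ` as a Euclidean space. -/
abbrev Rn (n : ℕ) : Type := EuclideanSpace ℝ (Fin n)

/-- Fourier transform `f̂(ξ) = ∫ e^{-i ξ·x} f(x) dⁿx`. -/
def ft {n : ℕ} (f : Rn n → ℂ) (ξ : Rn n) : ℂ :=
  ∫ x : Rn n, Complex.exp (-Complex.I * ((inner ℝ x ξ : ℝ) : ℂ)) * f x

/-- Fourier transform of a real-valued function. -/
def ftR {n : ℕ} (ρ : Rn n → ℝ) : Rn n → ℂ :=
  ft (fun x => ((ρ x : ℝ) : ℂ))

/-- Pairing `⟨ρ,ψ⟩ = ∫ ρ̄ ψ` (with `ρ` real-valued). -/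
def pairR {n : ℕ} (ρ : Rn n → ℝ) (ψ : Rn n → ℂ) : ℂ :=
  ∫ x : Rn n, ((ρ x : ℝ) : ℂ) * ψ x

/-- Laplacian `Δf = ∑ ∂²f/∂xᵢ²`. -/
def lap {n : ℕ} (f : Rn n → ℂ) (x : Rn n) : ℂ :=
  ∑ i : Fin n, fderiv ℝ (fun y => fderiv ℝ f y (EuclideanSpace.single i 1)) x
      (EuclideanSpace.single i 1)

/-- Laplacian of a (real-valued) test function, complexified. -/
def lapT {n : ℕ} (α : SchwartzMap (Rn n) ℝ) : Rn n → ℂ :=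
  lap (fun x => ((α x : ℝ) : ℂ))

/-- Pointwise time derivative `ψ̇(x,t)`. -/
def ψdot {n : ℕ} (ψ : ℝ → Rn n → ℂ) (t : ℝ) (x : Rn n) : ℂ :=
  deriv (fun s => ψ s x) t

/-- The state `Ψ(t) = (ψ(·,t), ψ̇(·,t))`. -/
def KGstate {n : ℕ} (ψ : ℝ → Rn n → ℂ) (t : ℝ) : (Rn n → ℂ) × (Rn n → ℂ) :=
  (ψ t, ψdot ψ t)

/-- Weak (space-tested) formulation of `ψ̈ = Δψ - m²ψ + ρ F(⟨ρ,ψ⟩)`. -/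
def WeakKG {n : ℕ} (m : ℝ) (ρ : Rn n → ℝ) (F : ℂ → ℂ) (ψ : ℝ → Rn n → ℂ) : Prop :=
  ∀ (α : SchwartzMap (Rn n) ℝ) (t : ℝ),
    deriv (fun s => deriv (fun r => pairR (fun x => α x) (ψ r)) s) t
      = (∫ x : Rn n, lapT α x * ψ t x)
        - (m^2 : ℂ) * pairR (fun x => α x) (ψ t)
        + F (pairR ρ (ψ t)) * pairR (fun x => α x) (fun x => ((ρ x : ℝ) : ℂ))

/-- Weak formulation of the driven Klein-Gordon equation `φ̈ = Δφ - m²φ + ρ f(t)`. -/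
def WeakKGdriven {n : ℕ} (m : ℝ) (ρ : Rn n → ℝ) (f : ℝ → ℂ) (φ : ℝ → Rn n → ℂ) : Prop :=
  ∀ (α : SchwartzMap (Rn n) ℝ) (t : ℝ),
    deriv (fun s => deriv (fun r => pairR (fun x => α x) (φ r)) s) t
      = (∫ x : Rn n, lapT α x * φ t x)
        - (m^2 : ℂ) * pairR (fun x => α x) (φ t)
        + f t * pairR (fun x => α x) (fun x => ((ρ x : ℝ) : ℂ))

/-- Weak (distributional) stationary equation `-ω²φ = Δφ - m²φ + ρ F(⟨ρ,φ⟩)`. -/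
def StatEq {n : ℕ} (m : ℝ) (ρ : Rn n → ℝ) (F : ℂ → ℂ) (ω : ℝ) (φ : Rn n → ℂ) : Prop :=
  ∀ α : SchwartzMap (Rn n) ℝ,
    -((ω : ℂ)^2) * pairR (fun x => α x) φ
      = (∫ x : Rn n, lapT α x * φ x) - (m^2 : ℂ) * pairR (fun x => α x) φ
        + F (pairR ρ φ) * pairR (fun x => α x) (fun x => ((ρ x : ℝ) : ℂ))

/-- Membership in `H¹(ℝⁿ)`. -/
def MemH1 {n : ℕ} (f : Rn n → ℂ) : Prop :=
  MemLp f 2 volume ∧ MemLp (fun x => fderiv ℝ f x) 2 volume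

/-- Membership in the energy space `E = H¹ ⊕ L²`. -/
def MemE {n : ℕ} (Ψ : (Rn n → ℂ) × (Rn n → ℂ)) : Prop :=
  MemH1 Ψ.1 ∧ MemLp Ψ.2 2 volume

/-- Squared energy norm `‖Ψ‖²_E = ‖π‖²_{L²} + ‖∇ψ‖²_{L²} + m²‖ψ‖²_{L²}`. -/
def ENormSq {n : ℕ} (m : ℝ) (Ψ : (Rn n → ℂ) × (Rn n → ℂ)) : ℝ :=
  (∫ x : Rn n, ‖Ψ.2 x‖^2) + (∫ x : Rn n, ‖fderiv ℝ Ψ.1 x‖^2) + m^2 * ∫ x : Rn n, ‖Ψ.1 x‖^2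

/-- Distance associated with the energy norm. -/
def Edist {n : ℕ} (m : ℝ) (Ψ Φ : (Rn n → ℂ) × (Rn n → ℂ)) : ℝ :=
  Real.sqrt (ENormSq m (fun x => Ψ.1 x - Φ.1 x, fun x => Ψ.2 x - Φ.2 x))

/-- Squared Sobolev norm `‖ψ‖²_{H^s} = ‖(m²-Δ)^{s/2}ψ‖²_{L²}`, via the Fourier transform. -/
def HsNormSq {n : ℕ} (m s : ℝ) (f : Rn n → ℂ) : ℝ :=
  ((2 * Real.pi)^n)⁻¹ * ∫ ξ : Rn n, (m^2 + ‖ξ‖^2) ^ s * ‖ft f ξ‖^2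

/-- Squared norm in `E^{-ε} = H^{1-ε} ⊕ H^{-ε}`. -/
def ENegNormSq {n : ℕ} (m ε : ℝ) (Ψ : (Rn n → ℂ) × (Rn n → ℂ)) : ℝ :=
  HsNormSq m (-ε) Ψ.2 + HsNormSq m (1-ε) Ψ.1

/-- Distance associated with the `E^{-ε}` norm. -/
def ENegDist {n : ℕ} (m ε : ℝ) (Ψ Φ : (Rn n → ℂ) × (Rn n → ℂ)) : ℝ :=
  Real.sqrt (ENegNormSq m ε (fun x => Ψ.1 x - Φ.1 x, fun x => Ψ.2 x - Φ.2 x))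

/-- `ψ` is a finite-energy solution (in `C(ℝ,E)`) of the Cauchy problem with data `Ψ₀`. -/
def IsSol {n : ℕ} (m : ℝ) (ρ : Rn n → ℝ) (F : ℂ → ℂ)
    (Ψ₀ : (Rn n → ℂ) × (Rn n → ℂ)) (ψ : ℝ → Rn n → ℂ) : Prop :=
  WeakKG m ρ F ψ ∧ KGstate ψ 0 = Ψ₀ ∧ (∀ t, MemE (KGstate ψ t)) ∧
  ∀ t₀ : ℝ, Tendsto (fun t => Edist m (KGstate ψ t) (KGstate ψ t₀)) (nhds t₀) (nhds 0)

/-- `σ(ω) = (2π)^{-n} ∫ |ρ̂(ξ)|²/(ξ²+m²-ω²) dⁿξ`. -/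
def sigmaFn {n : ℕ} (m : ℝ) (ρ : Rn n → ℝ) (ω : ℝ) : ℝ :=
  ((2 * Real.pi)^n)⁻¹ * ∫ ξ : Rn n, ‖ftR ρ ξ‖^2 / (‖ξ‖^2 + m^2 - ω^2)

/-- `Z_ρ = {ω ∈ ℝ∖[-m,m] : ρ̂ vanishes on the sphere m²+ξ²=ω²}`. -/
def Zrho {n : ℕ} (m : ℝ) (ρ : Rn n → ℝ) : Set ℝ :=
  {ω : ℝ | m < |ω| ∧ ∀ ξ : Rn n, m^2 + ‖ξ‖^2 = ω^2 → ftR ρ ξ = 0}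

/-- Local `H^s` norm on the ball of radius `R`, defined by duality against
`H^{-s}`-normalized test functions supported in the ball. -/
def locHsNorm {n : ℕ} (m s R : ℝ) (f : Rn n → ℂ) : ℝ :=
  sSup {r : ℝ | ∃ g : SchwartzMap (Rn n) ℂ,
      tsupport (fun x => g x) ⊆ closedBall (0 : Rn n) R ∧
      HsNormSq m (-s) (fun x => g x) ≤ 1 ∧
      r = ‖∫ x : Rn n, (starRingEnd ℂ) (g x) * f x‖}

/-- The seminorm `‖Ψ‖_{E_loc^{-ε}} = Σ_{R≥1} 2^{-R} ‖Ψ‖_{E^{-ε},R}`. -/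
def ELocNegNorm {n : ℕ} (m ε : ℝ) (Ψ : (Rn n → ℂ) × (Rn n → ℂ)) : ℝ :=
  ∑' R : ℕ, (2:ℝ)^(-(R:ℝ)-1) *
    Real.sqrt ((locHsNorm m (-ε) ((R:ℝ)+1) Ψ.2)^2 + (locHsNorm m (1-ε) ((R:ℝ)+1) Ψ.1)^2)

/-- The Hamiltonian `H(Ψ) = ½‖Ψ‖²_E + U(⟨ρ,ψ⟩)`. -/
def Ham {n : ℕ} (m : ℝ) (ρ : Rn n → ℝ) (U : ℂ → ℝ) (Ψ : (Rn n → ℂ) × (Rn n → ℂ)) : ℝ :=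
  (1/2) * ENormSq m Ψ + U (pairR ρ Ψ.1)

/-- The charge `Q(Ψ) = (i/2)∫ (ψ̄π - π̄ψ)`. -/
def Charge {n : ℕ} (Ψ : (Rn n → ℂ) × (Rn n → ℂ)) : ℂ :=
  (Complex.I/2) * ∫ x : Rn n,
    ((starRingEnd ℂ) (Ψ.1 x) * Ψ.2 x - (starRingEnd ℂ) (Ψ.2 x) * Ψ.1 x)

/-- Local (squared) energy seminorm over the ball of radius `R`. -/
def LocENormSq {n : ℕ} (m R : ℝ) (Ψ : (Rn n → ℂ) × (Rn n → ℂ)) : ℝ :=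
  (∫ x in Metric.ball (0 : Rn n) R, ‖Ψ.2 x‖^2)
    + (∫ x in Metric.ball (0 : Rn n) R, ‖fderiv ℝ Ψ.1 x‖^2)
    + m^2 * ∫ x in Metric.ball (0 : Rn n) R, ‖Ψ.1 x‖^2

/-- Fourier–Laplace transform `h̃(ω) = ∫₀^∞ e^{iωt} h(t) dt`. -/
def FL (h : ℝ → ℂ) (ω : ℂ) : ℂ :=
  ∫ t in Set.Ioi (0:ℝ), Complex.exp (Complex.I * ω * (t:ℂ)) * h t

/-- `Σ(x,ω) = (2π)^{-n} ∫ e^{iξ·x} ρ̂(ξ)/(ξ²+m²-ω²) dⁿξ`. -/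
def SigmaC {n : ℕ} (m : ℝ) (ρ : Rn n → ℝ) (x : Rn n) (ω : ℂ) : ℂ :=
  ((2 * Real.pi)^n : ℝ)⁻¹ * ∫ ξ : Rn n,
    Complex.exp (Complex.I * ((inner ℝ ξ x : ℝ) : ℂ)) * ftR ρ ξ / (((‖ξ‖^2 + m^2 : ℝ) : ℂ) - ω^2)

/-- `‖Σ(·,ω+iε)‖²_{L²}` via the Plancherel formula. -/
def SigmaNormSq {n : ℕ} (m : ℝ) (ρ : Rn n → ℝ) (ω ε : ℝ) : ℝ :=
  ((2 * Real.pi)^n)⁻¹ * ∫ ξ : Rn n,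
    ‖ftR ρ ξ‖^2 / Complex.normSq ((((‖ξ‖^2 + m^2 : ℝ)) : ℂ) - ((ω : ℂ) + (ε:ℂ) * Complex.I)^2)

/-- `R(η) = (2π)^{-n} ∫_{|ξ|=η} |ρ̂(ξ)|² dS(ξ)`, realized as the derivative (in the
radius) of the integral of `|ρ̂|²` over balls. -/
def sphR {n : ℕ} (ρ : Rn n → ℝ) (η : ℝ) : ℝ :=
  ((2 * Real.pi)^n)⁻¹ * deriv (fun r => ∫ ξ in Metric.ball (0 : Rn n) r, ‖ftR ρ ξ‖^2) η

/-- `M(ω) = R(√(ω²-m²))/ω²`. -/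
def Mfun {n : ℕ} (m : ℝ) (ρ : Rn n → ℝ) (ω : ℝ) : ℝ :=
  sphR ρ (Real.sqrt (ω^2 - m^2)) / ω^2

/-- `ζ̌ᵉ(t) = ∫ e^{iωt} ζ(ω) dω`, pairing kernel for the Fourier transform
`h̃(ω) = ∫ e^{iωt}h(t)dt` of a bounded function against a Schwartz test function. -/
def invTest (ζ : SchwartzMap ℝ ℂ) (t : ℝ) : ℂ :=
  ∫ ω : ℝ, Complex.exp (Complex.I * (ω:ℂ) * (t:ℂ)) * ζ ω

/-- Support of the (tempered-distribution) Fourier transform of a bounded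
continuous function `g : ℝ → ℂ`: the points near which `g̃` does not vanish. -/
def FTsupp (g : ℝ → ℂ) : Set ℝ :=
  {ω₀ : ℝ | ∀ δ > (0:ℝ), ∃ ζ : SchwartzMap ℝ ℂ,
      tsupport (fun ω => ζ ω) ⊆ Metric.ball ω₀ δ ∧ (∫ t : ℝ, g t * invTest ζ t) ≠ 0}

/-- The solitary-wave profile `φ_ω` with `φ̂_ω(ξ) = c ρ̂(ξ)/(ξ²+m²-ω²)`. -/
def solProfile {n : ℕ} (m : ℝ) (ρ : Rn n → ℝ) (ω : ℝ) (c : ℂ) (x : Rn n) : ℂ :=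
  ((2 * Real.pi)^n : ℝ)⁻¹ * ∫ ξ : Rn n,
    Complex.exp (Complex.I * ((inner ℝ ξ x : ℝ) : ℂ)) *
      (c * ftR ρ ξ / (((‖ξ‖^2 + m^2 - ω^2 : ℝ)) : ℂ))


/-- Distance (in the `E_loc^{-ε}` seminorm) from a state to the solitary manifold `S`. -/
def distToS {n : ℕ} (m ε : ℝ) (ρ : Rn n → ℝ) (F : ℂ → ℂ)
    (Ψ : (Rn n → ℂ) × (Rn n → ℂ)) : ℝ :=
  sInf {d : ℝ | ∃ (ω : ℝ) (φ : Rn n → ℂ), MemH1 φ ∧ StatEq m ρ F ω φ ∧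
      d = ELocNegNorm m ε (fun x => Ψ.1 x - φ x, fun x => Ψ.2 x + Complex.I * (ω:ℂ) * φ x)}


/-!
Cauchy–Schwarz gives `|⟨ρ, ψ⟩|² ≤ ‖ρ‖² ‖ψ‖²_{L²} ≤ (‖ρ‖²/m²) ‖Ψ‖²_E`, so the lower bound on `U`
yields `H(Ψ) - A ≥ ½‖Ψ‖²_E - B|⟨ρ, ψ⟩|² ≥ (m² - 2B‖ρ‖²)/(2m²) · ‖Ψ‖²_E`, and the smallness of `B`
makes the last factor positive.
-/

theorem norm_integral_mul_sq_le {α 𝕜 : Type*} [MeasurableSpace α] {μ : Measure α} [RCLike 𝕜]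
    {f g : α → 𝕜} (hf : MemLp f 2 μ) (hg : MemLp g 2 μ) :
    ‖∫ x, f x * g x ∂μ‖ ^ 2 ≤ (∫ x, ‖f x‖ ^ 2 ∂μ) * ∫ x, ‖g x‖ ^ 2 ∂μ := by
  have hHolder := integral_mul_norm_le_Lp_mul_Lq Real.HolderConjugate.two_two
    (by simpa using hf) (by simpa using hg)
  simp only [Real.rpow_two] at hHolder
  calc ‖∫ x, f x * g x ∂μ‖ ^ 2 ≤ (∫ x, ‖f x‖ * ‖g x‖ ∂μ) ^ 2 := by
        gcongr
        simpa only [norm_mul] using norm_integral_le_integral_norm (fun x => f x * g x)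
    _ ≤ (√(∫ x, ‖f x‖ ^ 2 ∂μ) * √(∫ x, ‖g x‖ ^ 2 ∂μ)) ^ 2 := by
        rw [Real.sqrt_eq_rpow, Real.sqrt_eq_rpow]
        gcongr
    _ = _ := by
        rw [mul_pow, Real.sq_sqrt (integral_nonneg fun x => by positivity),
          Real.sq_sqrt (integral_nonneg fun x => by positivity)]

theorem norm_pairR_sq_le {n : ℕ} {ρ : Rn n → ℝ} {ψ : Rn n → ℂ} (hρ : MemLp ρ 2 volume)
    (hψ : MemLp ψ 2 volume) :
    ‖pairR ρ ψ‖ ^ 2 ≤ (∫ x, ρ x ^ 2) * ∫ x, ‖ψ x‖ ^ 2 := by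
  have hρℂ : MemLp (fun x => (ρ x : ℂ)) 2 volume := hρ.ofReal
  simpa only [pairR, Complex.norm_real, Real.norm_eq_abs, sq_abs] using
    norm_integral_mul_sq_le hρℂ hψ

theorem mul_integral_norm_sq_le_ENormSq {n : ℕ} (m : ℝ) (ψ π : Rn n → ℂ) :
    m ^ 2 * ∫ x, ‖ψ x‖ ^ 2 ≤ ENormSq m (ψ, π) := by
  have hπ : 0 ≤ ∫ x, ‖π x‖ ^ 2 := integral_nonneg fun x => by positivity
  have hdψ : 0 ≤ ∫ x, ‖fderiv ℝ ψ x‖ ^ 2 := integral_nonneg fun x => by positivity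
  simp only [ENormSq]
  linarith

theorem sub_two_mul_mul_pos_of_lt_div {m B K : ℝ} (hB0 : 0 ≤ B) (hK : 0 ≤ K)
    (hB : B < m ^ 2 / (2 * K)) : 0 < m ^ 2 - 2 * B * K := by
  rcases hK.eq_or_lt with rfl | hKpos
  -- `m ^ 2 / 0 = 0`, so `K = 0` would force `B < 0`.
  · simp only [mul_zero, div_zero] at hB
    linarith
  · have := (lt_div_iff₀ (by positivity)).mp hB
    linarith

theorem statement3_general {n : ℕ} (m : ℝ)
    (ρ : SchwartzMap (Rn n) ℝ)
    (U : ℂ → ℝ)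
    (A B : ℝ) (hB0 : 0 ≤ B) (hB : B < m^2 / (2 * ∫ x : Rn n, (ρ x)^2))
    (hUAB : ∀ z : ℂ, A - B * ‖z‖^2 ≤ U z)
    (ψ π : Rn n → ℂ) (hmem : MemE (ψ, π)) :
    ENormSq m (ψ, π)
      ≤ (2 * m^2 / (m^2 - 2 * B * ∫ x : Rn n, (ρ x)^2)) *
          (Ham m (fun x => ρ x) U (ψ, π) - A) := by
  obtain ⟨⟨hψ, -⟩, -⟩ := hmem
  set K := ∫ x : Rn n, (ρ x) ^ 2
  have hK : 0 ≤ K := integral_nonneg fun x => sq_nonneg _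
  have hgap : 0 < m ^ 2 - 2 * B * K := sub_two_mul_mul_pos_of_lt_div hB0 hK hB
  have hCS : ‖pairR (fun x => ρ x) ψ‖ ^ 2 ≤ K * ∫ x, ‖ψ x‖ ^ 2 :=
    norm_pairR_sq_le (ρ.memLp 2) hψ
  have hψE := mul_integral_norm_sq_le_ENormSq m ψ π
  have hU := hUAB (pairR (fun x => ρ x) ψ)
  rw [Ham, div_mul_eq_mul_div, le_div_iff₀ hgap]
  nlinarith [mul_le_mul_of_nonneg_left hCS hB0, mul_le_mul_of_nonneg_left hψE (mul_nonneg hB0 hK)]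

/-- Coercivity bound. -/
theorem statement3 {n : ℕ} (hn : 1 ≤ n) (m : ℝ) (hm : 0 < m)
    (ρ : SchwartzMap (Rn n) ℝ) (hρ : ρ ≠ 0)
    (U : ℂ → ℝ) (hU : ContDiff ℝ 2 U)
    (A B : ℝ) (hB0 : 0 ≤ B) (hB : B < m^2 / (2 * ∫ x : Rn n, (ρ x)^2))
    (hUAB : ∀ z : ℂ, A - B * ‖z‖^2 ≤ U z)
    (ψ π : Rn n → ℂ) (hmem : MemE (ψ, π)) :
    ENormSq m (ψ, π)
      ≤ (2 * m^2 / (m^2 - 2 * B * ∫ x : Rn n, (ρ x)^2)) *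
          (Ham m (fun x => ρ x) U (ψ, π) - A) :=
  statement3_general m ρ U A B hB0 hB hUAB ψ π hmem
end
end

section
/- Let n ≥ 1, m > 0, and let ρ be a real-valued Schwartz function on ℝⁿ with ρ ≢ 0. Let I ⊂ ℝ be a compact interval with I ∩ ([−m,m] ∪ Z_ρ) = ∅. Then there exists ε_I > 0 such that for all ω ∈ I and all 0 < ε ≤ ε_I, ‖Σ(·, ω + iε)‖²_{L²(ℝⁿ)} ≥ M(ω)/(40ε), where M(ω) = R(√(ω² − m²))/ω² and R(η) = (2π)^{−n}∫_{|ξ|=η} |ρ̂(ξ)|² dS(ξ). -/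
noncomputable section

open MeasureTheory Complex Filter Metric

/-! Write `F = |ρ̂|²` and `h(t) = ∫_{|ξ|=t} F dS`, so that `∫_{|ξ|<r} F = ∫₀^r h` by polar
coordinates and `(2π)ⁿ R = h`. For `ω ∈ I`, `ω ∉ Z_ρ` gives a point of the sphere
`|ξ| = η(ω) := √(ω² - m²)` where `F > 0`, so `h ∘ η` is positive, hence bounded below, on `I`;
by uniform continuity, `∫_η^{η+ε} h ≥ ε h(η) / 2` for all small `ε`. On the shell
`η ≤ |ξ| < η + ε` the denominator `|ξ² + m² - (ω + iε)²|²` is at most `20 ω² ε²`, so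
`(2π)ⁿ ‖Σ(·, ω + iε)‖² ≥ ∫_shell F / (20 ω² ε²) ≥ h(η) / (40 ω² ε)`. -/

open Set

section Polar

variable {E F : Type*} [NormedAddCommGroup E] [NormedSpace ℝ E] [MeasurableSpace E]
  [NormedAddCommGroup F] [NormedSpace ℝ F] (μ : Measure E)

def sphereIntegral (f : E → F) (t : ℝ) : F :=
  t ^ (Module.finrank ℝ E - 1) • ∫ θ : sphere (0 : E) 1, f (t • (θ : E)) ∂μ.toSphere

theorem sphereIntegral_indicator_ball {f : E → F} {r t : ℝ} (ht : 0 < t) :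
    sphereIntegral μ ((ball (0 : E) r).indicator f) t =
      (Iio r).indicator (sphereIntegral μ f) t := by
  have hnorm : ∀ θ : sphere (0 : E) 1, ‖t • (θ : E)‖ = t := fun θ => by
    rw [norm_smul, Real.norm_of_nonneg ht.le, norm_eq_of_mem_sphere θ, mul_one]
  by_cases htr : t < r
  · rw [indicator_of_mem (mem_Iio.2 htr), sphereIntegral, sphereIntegral]
    congr 2 with θ
    rw [indicator_of_mem (by rw [mem_ball_zero_iff, hnorm θ]; exact htr)]
  · have h0 : ∀ θ : sphere (0 : E) 1, (ball (0 : E) r).indicator f (t • (θ : E)) = 0 := fun θ =>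
      indicator_of_notMem (by rwa [mem_ball_zero_iff, hnorm]) _
    simp [indicator_of_notMem (fun h => htr (mem_Iio.1 h)), sphereIntegral, h0]

variable [FiniteDimensional ℝ E] [BorelSpace E] [μ.IsAddHaarMeasure]

theorem integral_eq_integral_Ioi_sphereIntegral [Nontrivial E] {f : E → F}
    (hf : Integrable f μ) :
    ∫ x, f x ∂μ = ∫ t in Ioi (0 : ℝ), sphereIntegral μ f t := by
  set g : sphere (0 : E) 1 × Ioi (0 : ℝ) → F := fun p => f ((p.2 : ℝ) • (p.1 : E))
  have hg : ∀ x : ({0}ᶜ : Set E), g (homeomorphUnitSphereProd E x) = f x := fun x => by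
    simp [g, smul_inv_smul₀ (norm_ne_zero_iff.2 x.2)]
  have hmp := μ.measurePreserving_homeomorphUnitSphereProd
  have hf' : Integrable (fun x : ({0}ᶜ : Set E) => f x) (μ.comap (↑)) :=
    (integrableOn_iff_comap_subtypeVal (measurableSet_singleton _).compl).1 hf.integrableOn
  have hgi : Integrable g (μ.toSphere.prod (Measure.volumeIoiPow (Module.finrank ℝ E - 1))) := by
    rw [← hmp.integrable_comp_emb (Homeomorph.measurableEmbedding _)]
    simpa only [Function.comp_def, hg] using hf'
  calc ∫ x, f x ∂μ = ∫ x : ({0}ᶜ : Set E), f x ∂(μ.comap (↑)) := by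
        rw [integral_subtype_comap (measurableSet_singleton _).compl, restrict_compl_singleton]
    _ = ∫ p, g p ∂(μ.toSphere.prod (Measure.volumeIoiPow (Module.finrank ℝ E - 1))) := by
        rw [← hmp.integral_comp (Homeomorph.measurableEmbedding _)]
        simp only [hg]
    _ = ∫ t in Ioi (0 : ℝ), sphereIntegral μ f t := by
        rw [integral_prod_symm g hgi, Measure.volumeIoiPow,
          integral_withDensity_eq_integral_toReal_smul (by fun_prop)
            (ae_of_all _ fun _ => ENNReal.ofReal_lt_top),
          ← integral_subtype_comap measurableSet_Ioi]
        refine integral_congr_ae (ae_of_all _ fun t => ?_)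
        simp only [ENNReal.toReal_ofReal (pow_nonneg t.2.out.le _)]
        rfl

theorem setIntegral_ball_eq_intervalIntegral_sphereIntegral [Nontrivial E] {f : E → F}
    (hf : Integrable f μ) {r : ℝ} (hr : 0 ≤ r) :
    ∫ x in ball (0 : E) r, f x ∂μ = ∫ t in (0 : ℝ)..r, sphereIntegral μ f t := by
  rw [← integral_indicator measurableSet_ball,
    integral_eq_integral_Ioi_sphereIntegral μ (hf.indicator measurableSet_ball),
    setIntegral_congr_fun measurableSet_Ioi fun t ht => sphereIntegral_indicator_ball μ ht,
    integral_indicator measurableSet_Iio, Measure.restrict_restrict measurableSet_Iio,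
    Iio_inter_Ioi, intervalIntegral.integral_of_le hr, integral_Ioc_eq_integral_Ioo]

theorem continuous_sphereIntegral {f : E → F} (hf : Continuous f) :
    Continuous (sphereIntegral μ f) := by
  have h := continuous_parametric_integral_of_continuous (μ := μ.toSphere)
    (f := fun (t : ℝ) (θ : sphere (0 : E) 1) => f (t • (θ : E))) (by fun_prop) isCompact_univ
  simp only [Measure.restrict_univ] at h
  exact (continuous_pow _).smul h

theorem hasDerivAt_setIntegral_ball [Nontrivial E] [CompleteSpace F] {f : E → F}
    (hf : Integrable f μ) (hc : Continuous f) {r : ℝ} (hr : 0 < r) :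
    HasDerivAt (fun s => ∫ x in ball (0 : E) s, f x ∂μ) (sphereIntegral μ f r) r := by
  have hcont := continuous_sphereIntegral μ hc
  refine (intervalIntegral.integral_hasDerivAt_right (hcont.intervalIntegrable 0 r)
    hcont.stronglyMeasurable.stronglyMeasurableAtFilter
    hcont.continuousAt).congr_of_eventuallyEq ?_
  filter_upwards [eventually_gt_nhds hr] with s hs
  exact setIntegral_ball_eq_intervalIntegral_sphereIntegral μ hf hs.le

theorem setIntegral_ball_sdiff_ball [Nontrivial E] {f : E → F} (hf : Integrable f μ)
    (hc : Continuous f) {r₁ r₂ : ℝ} (h₀ : 0 ≤ r₁) (h₁₂ : r₁ ≤ r₂) :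
    ∫ x in ball (0 : E) r₂ \ ball 0 r₁, f x ∂μ = ∫ t in r₁..r₂, sphereIntegral μ f t := by
  have hcont := continuous_sphereIntegral μ hc
  rw [setIntegral_sdiff measurableSet_ball hf.integrableOn (ball_subset_ball h₁₂),
    setIntegral_ball_eq_intervalIntegral_sphereIntegral μ hf (h₀.trans h₁₂),
    setIntegral_ball_eq_intervalIntegral_sphereIntegral μ hf h₀,
    intervalIntegral.integral_interval_sub_left (hcont.intervalIntegrable _ _)
      (hcont.intervalIntegrable _ _)]

theorem sphereIntegral_pos {f : E → ℝ} (hf : Continuous f) (h₀ : 0 ≤ f) {ξ : E}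
    (hξ₀ : ξ ≠ 0) (hξ : 0 < f ξ) : 0 < sphereIntegral μ f ‖ξ‖ := by
  have hθ : ‖ξ‖⁻¹ • ξ ∈ sphere (0 : E) 1 := by
    rw [mem_sphere_zero_iff_norm, norm_smul, norm_inv, norm_norm,
      inv_mul_cancel₀ (norm_ne_zero_iff.2 hξ₀)]
  refine smul_pos (pow_pos (norm_pos_iff.2 hξ₀) _) ?_
  refine Continuous.integral_pos_of_hasCompactSupport_nonneg_nonzero (x := ⟨_, hθ⟩) (by fun_prop)
    (.of_compactSpace _) (fun θ => h₀ _) ?_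
  rw [smul_inv_smul₀ (norm_ne_zero_iff.2 hξ₀)]
  exact hξ.ne'

end Polar

theorem exists_pos_forall_mul_le_intervalIntegral {h : ℝ → ℝ} (hh : Continuous h) {K : Set ℝ}
    (hK : IsCompact K) (hpos : ∀ x ∈ K, 0 < h x) :
    ∃ δ > 0, ∀ x ∈ K, ∀ ε, 0 ≤ ε → ε ≤ δ → ε * (h x / 2) ≤ ∫ t in x..x + ε, h t := by
  obtain ⟨c, hc, hcK⟩ := hK.exists_forall_le' hh.continuousOn hpos
  obtain ⟨δ, hδ, hδh⟩ := Metric.mem_uniformity_dist.1 <| hK.uniformContinuousAt_of_continuousAt h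
    (fun x _ => hh.continuousAt) (Metric.dist_mem_uniformity (half_pos hc))
  refine ⟨δ / 2, half_pos hδ, fun x hx ε hε hεδ => ?_⟩
  have hhalf : ∀ t ∈ Icc x (x + ε), h x / 2 ≤ h t := fun t ht => by
    have hxt : dist x t < δ := by
      rw [Real.dist_eq, abs_sub_comm, abs_of_nonneg (by linarith [ht.1])]
      linarith [ht.2]
    have : dist (h x) (h t) < c / 2 := hδh hxt hx
    rw [Real.dist_eq] at this
    linarith [(abs_lt.1 this).2, hcK x hx]
  calc ε * (h x / 2) = ∫ _ in x..x + ε, h x / 2 := by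
        rw [intervalIntegral.integral_const, smul_eq_mul, add_sub_cancel_left]
    _ ≤ ∫ t in x..x + ε, h t :=
      intervalIntegral.integral_mono_on (by linarith) intervalIntegrable_const
        (hh.intervalIntegrable _ _) hhalf

open scoped FourierTransform

theorem ftR_eq_fourier {n : ℕ} (ρ : SchwartzMap (Rn n) ℝ) (ξ : Rn n) :
    ftR ρ ξ = 𝓕 (ρ.postcompCLM ofRealCLM) ((2 * Real.pi)⁻¹ • ξ) := by
  rw [SchwartzMap.fourier_coe, Real.fourier_eq', ftR, ft]
  refine integral_congr_ae (ae_of_all _ fun x => ?_)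
  dsimp only
  rw [real_inner_smul_right, SchwartzMap.postcompCLM_apply, smul_eq_mul]
  congr 2
  push_cast
  field_simp

theorem continuous_norm_ftR_sq {n : ℕ} (ρ : SchwartzMap (Rn n) ℝ) :
    Continuous fun ξ => ‖ftR ρ ξ‖ ^ 2 := by
  simp_rw [ftR_eq_fourier]
  fun_prop

theorem integrable_norm_ftR_sq {n : ℕ} (ρ : SchwartzMap (Rn n) ℝ) :
    Integrable fun ξ => ‖ftR ρ ξ‖ ^ 2 := by
  simp_rw [ftR_eq_fourier]
  exact ((𝓕 (ρ.postcompCLM ofRealCLM)).memLp 2).integrable_norm_pow two_ne_zero |>.comp_smul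
    (R := (2 * Real.pi)⁻¹) (by positivity)

theorem sphR_eq_sphereIntegral {n : ℕ} [Nontrivial (Rn n)] (ρ : SchwartzMap (Rn n) ℝ) {η : ℝ}
    (hη : 0 < η) :
    sphR ρ η = ((2 * Real.pi) ^ n)⁻¹ * sphereIntegral volume (fun ξ => ‖ftR ρ ξ‖ ^ 2) η := by
  rw [sphR, (hasDerivAt_setIntegral_ball volume (integrable_norm_ftR_sq ρ)
    (continuous_norm_ftR_sq ρ) hη).deriv]

theorem lt_abs_and_exists_ftR_ne_zero {n : ℕ} {ρ : Rn n → ℝ} {m ω : ℝ}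
    (hω : ω ∉ Icc (-m) m ∪ Zrho m ρ) :
    m < |ω| ∧ ∃ ξ : Rn n, m ^ 2 + ‖ξ‖ ^ 2 = ω ^ 2 ∧ ftR ρ ξ ≠ 0 := by
  obtain ⟨hIcc, hZ⟩ := not_or.1 hω
  have hmω : m < |ω| := lt_of_not_ge fun h => hIcc (abs_le.1 h)
  refine ⟨hmω, ?_⟩
  by_contra! h
  exact hZ ⟨hmω, h⟩

theorem normSq_ofReal_sub_sq (s ω ε : ℝ) :
    normSq ((s : ℂ) - (ω + ε * I) ^ 2) = (s - ω ^ 2 + ε ^ 2) ^ 2 + (2 * ω * ε) ^ 2 := by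
  simp only [sq, normSq_apply, sub_re, sub_im, add_re, add_im, mul_re, mul_im, ofReal_re,
    ofReal_im, I_re, I_im]
  ring

theorem sq_add_sq_le_of_sqrt_le_of_le_sqrt_add {t m ω ε : ℝ} (hmω : m ^ 2 ≤ ω ^ 2)
    (ht₀ : √(ω ^ 2 - m ^ 2) ≤ t) (ht₁ : t ≤ √(ω ^ 2 - m ^ 2) + ε) (hε : 0 ≤ ε)
    (hεω : ε ≤ |ω|) :
    (t ^ 2 + m ^ 2 - ω ^ 2 + ε ^ 2) ^ 2 + (2 * ω * ε) ^ 2 ≤ 20 * ω ^ 2 * ε ^ 2 := by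
  set η := √(ω ^ 2 - m ^ 2)
  have hη₀ : 0 ≤ η := Real.sqrt_nonneg _
  have hη_sq : η ^ 2 = ω ^ 2 - m ^ 2 := Real.sq_sqrt (by linarith)
  have hηω : η ≤ |ω| := by
    rw [← Real.sqrt_sq_eq_abs]
    exact Real.sqrt_le_sqrt (by nlinarith)
  have hlo : 0 ≤ t ^ 2 + m ^ 2 - ω ^ 2 + ε ^ 2 := by nlinarith
  have hhi : t ^ 2 + m ^ 2 - ω ^ 2 + ε ^ 2 ≤ 4 * |ω| * ε := by nlinarith
  have hsq : (t ^ 2 + m ^ 2 - ω ^ 2 + ε ^ 2) ^ 2 ≤ 16 * ω ^ 2 * ε ^ 2 := by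
    nlinarith [sq_abs ω, mul_le_mul hhi hhi hlo (by positivity)]
  nlinarith

theorem intervalIntegral_sphereIntegral_le_sigmaNormSq {n : ℕ} [Nontrivial (Rn n)]
    (ρ : SchwartzMap (Rn n) ℝ) {m ω ε : ℝ} (hmω : m ^ 2 < ω ^ 2) (hε : 0 < ε) (hεω : ε ≤ |ω|) :
    ((2 * Real.pi) ^ n)⁻¹ * ((20 * ω ^ 2 * ε ^ 2)⁻¹ *
      ∫ t in √(ω ^ 2 - m ^ 2)..√(ω ^ 2 - m ^ 2) + ε,
        sphereIntegral volume (fun ξ => ‖ftR ρ ξ‖ ^ 2) t) ≤ SigmaNormSq m ρ ω ε := by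
  set η := √(ω ^ 2 - m ^ 2)
  set F : Rn n → ℝ := fun ξ => ‖ftR ρ ξ‖ ^ 2
  set D : Rn n → ℝ := fun ξ => normSq (((‖ξ‖ ^ 2 + m ^ 2 : ℝ) : ℂ) - (ω + ε * I) ^ 2)
  set shell := ball (0 : Rn n) (η + ε) \ ball 0 η
  have hω : ω ≠ 0 := by rintro rfl; nlinarith
  have hF₀ : ∀ ξ, 0 ≤ F ξ := fun ξ => by positivity
  have hFi : Integrable F := integrable_norm_ftR_sq ρ
  have hD_ge : ∀ ξ, (2 * ω * ε) ^ 2 ≤ D ξ := fun ξ => by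
    simp only [D, normSq_ofReal_sub_sq]
    nlinarith
  have hD_le : ∀ ξ ∈ shell, D ξ ≤ 20 * ω ^ 2 * ε ^ 2 := fun ξ hξ => by
    simp only [shell, Set.mem_sdiff, mem_ball_zero_iff, not_lt] at hξ
    simp only [D, normSq_ofReal_sub_sq]
    exact sq_add_sq_le_of_sqrt_le_of_le_sqrt_add hmω.le hξ.2 hξ.1.le hε.le hεω
  have hpos : (0 : ℝ) < (2 * ω * ε) ^ 2 := by positivity
  have hQi : Integrable fun ξ => F ξ / D ξ := by
    refine (hFi.div_const ((2 * ω * ε) ^ 2)).mono' ?_ (ae_of_all _ fun ξ => ?_)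
    · exact ((continuous_norm_ftR_sq ρ).div (by fun_prop)
        fun ξ => (hpos.trans_le (hD_ge ξ)).ne').aestronglyMeasurable
    · rw [Real.norm_of_nonneg (div_nonneg (hF₀ ξ) (hpos.le.trans (hD_ge ξ)))]
      exact div_le_div_of_nonneg_left (hF₀ ξ) hpos (hD_ge ξ)
  rw [SigmaNormSq]
  gcongr ((2 * Real.pi) ^ n)⁻¹ * ?_
  calc (20 * ω ^ 2 * ε ^ 2)⁻¹ * ∫ t in η..η + ε, sphereIntegral volume F t
      = ∫ ξ in shell, F ξ / (20 * ω ^ 2 * ε ^ 2) := by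
        rw [integral_div, inv_mul_eq_div, ← setIntegral_ball_sdiff_ball volume hFi
          (continuous_norm_ftR_sq ρ) (Real.sqrt_nonneg _) (by linarith)]
    _ ≤ ∫ ξ in shell, F ξ / D ξ :=
        setIntegral_mono_on (hFi.div_const _).integrableOn hQi.integrableOn
          (measurableSet_ball.diff measurableSet_ball) fun ξ hξ =>
            div_le_div_of_nonneg_left (hF₀ ξ) (hpos.trans_le (hD_ge ξ)) (hD_le ξ hξ)
    _ ≤ ∫ ξ, F ξ / D ξ := setIntegral_le_integral hQi (ae_of_all _ fun ξ =>
        div_nonneg (hF₀ ξ) (hpos.le.trans (hD_ge ξ)))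

theorem statement11_general {n : ℕ} (hn : 1 ≤ n) (m : ℝ) (hm : 0 < m)
    (ρ : SchwartzMap (Rn n) ℝ) (a b : ℝ)
    (hI : Set.Icc a b ∩ (Set.Icc (-m) m ∪ Zrho m (fun x => ρ x)) = ∅) :
    ∃ εI > (0:ℝ), ∀ ω ∈ Set.Icc a b, ∀ ε : ℝ, 0 < ε → ε ≤ εI →
      Mfun m (fun x => ρ x) ω / (40 * ε) ≤ SigmaNormSq m (fun x => ρ x) ω ε := by
  have : NeZero n := ⟨by omega⟩
  set h := sphereIntegral volume fun ξ => ‖ftR ρ ξ‖ ^ 2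
  have hspec : ∀ ω ∈ Icc a b, m < |ω| ∧ ∃ ξ : Rn n, m ^ 2 + ‖ξ‖ ^ 2 = ω ^ 2 ∧ ftR ρ ξ ≠ 0 :=
    fun ω hω => lt_abs_and_exists_ftR_ne_zero fun hω' =>
      eq_empty_iff_forall_notMem.1 hI ω ⟨hω, hω'⟩
  have hsq : ∀ ω ∈ Icc a b, m ^ 2 < ω ^ 2 := fun ω hω =>
    sq_lt_sq.2 (by rw [abs_of_pos hm]; exact (hspec ω hω).1)
  have hpos : ∀ η ∈ (fun ω => √(ω ^ 2 - m ^ 2)) '' Icc a b, 0 < h η := by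
    rintro _ ⟨ω, hω, rfl⟩
    obtain ⟨ξ, hξ, hξρ⟩ := (hspec ω hω).2
    have hnorm : √(ω ^ 2 - m ^ 2) = ‖ξ‖ := by
      rw [← hξ, add_sub_cancel_left, Real.sqrt_sq (norm_nonneg ξ)]
    dsimp only
    rw [hnorm]
    refine sphereIntegral_pos volume (continuous_norm_ftR_sq ρ) (fun _ => by positivity) ?_
      (by positivity)
    rintro rfl
    rw [norm_zero, zero_pow two_ne_zero, add_zero] at hξ
    linarith [hsq ω hω]
  obtain ⟨δ, hδ, hδh⟩ := exists_pos_forall_mul_le_intervalIntegral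
    (continuous_sphereIntegral volume (continuous_norm_ftR_sq ρ))
    (isCompact_Icc.image (by fun_prop)) hpos
  refine ⟨min δ m, lt_min hδ hm, fun ω hω ε hε hεI => ?_⟩
  have hη : 0 < √(ω ^ 2 - m ^ 2) := Real.sqrt_pos.2 (by linarith [hsq ω hω])
  have hω₀ : ω ≠ 0 := by rintro rfl; linarith [hsq 0 hω, sq_nonneg m]
  calc Mfun m ρ ω / (40 * ε)
      = ((2 * Real.pi) ^ n)⁻¹ * ((20 * ω ^ 2 * ε ^ 2)⁻¹ * (ε * (h √(ω ^ 2 - m ^ 2) / 2))) := by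
        rw [Mfun, sphR_eq_sphereIntegral ρ hη]
        field_simp
        ring
    _ ≤ ((2 * Real.pi) ^ n)⁻¹ * ((20 * ω ^ 2 * ε ^ 2)⁻¹ *
          ∫ t in √(ω ^ 2 - m ^ 2)..√(ω ^ 2 - m ^ 2) + ε, h t) := by
        gcongr
        exact hδh _ (mem_image_of_mem _ hω) ε hε.le (hεI.trans (min_le_left _ _))
    _ ≤ SigmaNormSq m ρ ω ε := intervalIntegral_sphereIntegral_le_sigmaNormSq ρ (hsq ω hω) hε
        ((hεI.trans (min_le_right _ _)).trans (hspec ω hω).1.le)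

/-- Lower bound for `‖Σ(·,ω+iε)‖²_{L²}`, Lemma 2.6. -/
theorem statement11 {n : ℕ} (hn : 1 ≤ n) (m : ℝ) (hm : 0 < m)
    (ρ : SchwartzMap (Rn n) ℝ) (hρ : ρ ≠ 0)
    (a b : ℝ) (hab : a ≤ b)
    (hI : Set.Icc a b ∩ (Set.Icc (-m) m ∪ Zrho m (fun x => ρ x)) = ∅) :
    ∃ εI > (0:ℝ), ∀ ω ∈ Set.Icc a b, ∀ ε : ℝ, 0 < ε → ε ≤ εI →
      Mfun m (fun x => ρ x) ω / (40 * ε) ≤ SigmaNormSq m (fun x => ρ x) ω ε :=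
  statement11_general hn m hm ρ a b hI
end
end
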